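/- Let p ≥ 2 and let α be a product of the form σ2 · Q · Δ3^{2k} where Q is a (possibly empty) word in the two letters σ1⁻¹ and σ2 and k ∈ ℤ. Then the row vector (1,0) ∈ Z_p[t,t⁻¹]² is not fixed by the reduced Burau action of α; in particular ρ(α) is not the identity matrix. -/

import Mathlib

open LaurentPolynomial

variable (p : ℕ)

/-- The Burau matrix of `σ₂` in `B₃` over `Z_p[t,t⁻¹]`. -/
noncomputable def M2 (p : ℕ) : Matrix (Fin 2) (Fin 2) (LaurentPolynomial (ZMod p)) :=
  !![1, T 1; 0, -T 1]

/-- The Burau matrix of `σ₁⁻¹` in `B₃`: the inverse of `[[-t,0],[1,1]]`. -/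
noncomputable def M1inv (p : ℕ) : Matrix (Fin 2) (Fin 2) (LaurentPolynomial (ZMod p)) :=
  !![-T (-1), 0; T (-1), 1]

/-- A letter of the word `Q`: `true ↦ ρ(σ₁⁻¹)`, `false ↦ ρ(σ₂)`. -/
noncomputable def letterMat (p : ℕ) : Bool → Matrix (Fin 2) (Fin 2) (LaurentPolynomial (ZMod p))
  | true => M1inv p
  | false => M2 p

namespace BurauAux

variable {S : Type*} [CommRing S]

lemma le_degree {f : S[T;T⁻¹]} {n : ℤ} (h : f.coeff n ≠ 0) : (n : WithBot ℤ) ≤ f.degree :=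
  Finset.le_max (Finsupp.mem_support_iff.mpr h)

lemma degree_add_le (f g : S[T;T⁻¹]) : (f + g).degree ≤ max f.degree g.degree := by
  refine Finset.max_le fun n hn => ?_
  rcases Finset.mem_union.mp (Finsupp.support_add hn) with h | h
  · exact le_trans (Finset.le_max h) (le_max_left _ _)
  · exact le_trans (Finset.le_max h) (le_max_right _ _)

lemma degree_neg (f : S[T;T⁻¹]) : (-f).degree = f.degree := by
  unfold LaurentPolynomial.degree
  rw [AddMonoidAlgebra.coeff_neg, Finsupp.support_neg]

lemma degree_mul_T (f : S[T;T⁻¹]) (n : ℤ) : (f * T n).degree = f.degree + n := by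
  have hs : (f * T n).coeff.support = f.coeff.support.map (addRightEmbedding n) :=
    AddMonoidAlgebra.support_coeff_mul_single f 1 (by simp) n
  unfold LaurentPolynomial.degree
  rw [hs, Finset.max_eq_sup_withBot, Finset.max_eq_sup_withBot, Finset.sup_map]
  have hsup : ∀ x y : WithBot ℤ, (x ⊔ y) + (n : WithBot ℤ) = (x + n) ⊔ (y + n) := by
    intro x y
    rcases le_total x y with h | h
    · rw [sup_eq_right.mpr h, sup_eq_right.mpr (add_le_add_left h _)]
    · rw [sup_eq_left.mpr h, sup_eq_left.mpr (add_le_add_left h _)]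
  have hbot : (⊥ : WithBot ℤ) + (n : WithBot ℤ) = ⊥ := WithBot.bot_add _
  rw [show (WithBot.some ∘ ⇑(addRightEmbedding n) : ℤ → WithBot ℤ)
      = ((fun x : WithBot ℤ => x + (n : WithBot ℤ)) ∘ fun a : ℤ => (a : WithBot ℤ)) from
    funext fun a => by simp [addRightEmbedding, ← WithBot.coe_add]]
  exact (Finset.comp_sup_eq_sup_comp (s := f.coeff.support)
    (f := fun a : ℤ => (a : WithBot ℤ)) (fun x : WithBot ℤ => x + (n : WithBot ℤ)) hsup hbot).symm

lemma degree_add_eq_right {f g : S[T;T⁻¹]} (h : f.degree < g.degree) :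
    (f + g).degree = g.degree := by
  have hg : g ≠ 0 := by
    rintro rfl
    simp only [degree_zero] at h
    exact absurd h (not_lt_bot)
  obtain ⟨n, hn⟩ : ∃ n : ℤ, g.degree = (n : WithBot ℤ) := by
    rcases hd : g.degree with _ | n
    · exact absurd (degree_eq_bot_iff.mp hd) hg
    · exact ⟨n, rfl⟩
  have hgn : g.coeff n ≠ 0 := Finsupp.mem_support_iff.mp (Finset.mem_of_max hn)
  have hfn : f.coeff n = 0 := by
    by_contra hfn
    exact absurd (le_degree hfn) (not_le.mpr (hn ▸ h))
  refine le_antisymm ((degree_add_le f g).trans_eq (max_eq_right h.le)) ?_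
  rw [hn]
  apply le_degree
  show f.coeff n + g.coeff n ≠ 0
  rw [hfn, zero_add]
  exact hgn

end BurauAux

open BurauAux Matrix

lemma vecMul_smul_one {S : Type*} [CommRing S] {n : Type*} [Fintype n] [DecidableEq n]
    (v : n → S) (c : S) : v ᵥ* (c • (1 : Matrix n n S)) = fun j => v j * c := by
  funext j
  simp [Matrix.vecMul, dotProduct, Matrix.smul_apply, Matrix.one_apply, mul_ite,
    Finset.sum_ite_eq', mul_comm]

/-- The invariant: degree of first coordinate strictly smaller than the second. -/
def GoodVec (p : ℕ) (v : Fin 2 → LaurentPolynomial (ZMod p)) : Prop :=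
  (v 0).degree < (v 1).degree

lemma goodVec_step (p : ℕ) (v : Fin 2 → LaurentPolynomial (ZMod p)) (hv : GoodVec p v)
    (b : Bool) : GoodVec p (v ᵥ* letterMat p b) := by
  have hg : v 1 ≠ 0 := by
    intro h0
    rw [GoodVec, h0, degree_zero] at hv
    exact absurd hv not_lt_bot
  obtain ⟨n, hn⟩ : ∃ n : ℤ, (v 1).degree = (n : WithBot ℤ) := by
    rcases hd : (v 1).degree with _ | n
    · exact absurd (degree_eq_bot_iff.mp hd) hg
    · exact ⟨n, rfl⟩
  cases b with
  | true =>
    have h0 : (v ᵥ* letterMat p true) 0 = v 0 * (-T (-1)) + v 1 * T (-1) := by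
      simp [letterMat, M1inv, vecMul, dotProduct, Fin.sum_univ_two]
    have h1 : (v ᵥ* letterMat p true) 1 = v 1 := by
      simp [letterMat, M1inv, vecMul, dotProduct, Fin.sum_univ_two]
    rw [GoodVec, h0, h1]
    refine lt_of_le_of_lt (degree_add_le _ _) (max_lt ?_ ?_)
    · rw [show v 0 * (-T (-1)) = -(v 0 * T (-1)) by ring, degree_neg, degree_mul_T, hn]
      calc (v 0).degree + ((-1 : ℤ) : WithBot ℤ)
          ≤ (n : WithBot ℤ) + ((-1 : ℤ) : WithBot ℤ) :=
            add_le_add_left (hn ▸ hv.le) _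
        _ = ((n - 1 : ℤ) : WithBot ℤ) := by
            rw [← WithBot.coe_add]; exact congrArg _ (by ring)
        _ < (n : WithBot ℤ) := by exact_mod_cast sub_one_lt n
    · rw [degree_mul_T, hn]
      calc (n : WithBot ℤ) + ((-1 : ℤ) : WithBot ℤ)
          = ((n - 1 : ℤ) : WithBot ℤ) := by rw [← WithBot.coe_add]; exact congrArg _ (by ring)
        _ < (n : WithBot ℤ) := by exact_mod_cast sub_one_lt n
  | false =>
    have h0 : (v ᵥ* letterMat p false) 0 = v 0 := by
      simp [letterMat, M2, vecMul, dotProduct, Fin.sum_univ_two]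
    have h1 : (v ᵥ* letterMat p false) 1 = v 0 * T 1 + v 1 * (-T 1) := by
      simp [letterMat, M2, vecMul, dotProduct, Fin.sum_univ_two]
    rw [GoodVec, h0, h1]
    have hdeg : (v 0 * T 1).degree < (v 1 * (-T 1)).degree := by
      rw [show v 1 * (-T 1) = -(v 1 * T 1) by ring, degree_neg, degree_mul_T, degree_mul_T]
      exact WithBot.add_lt_add_right (by exact_mod_cast WithBot.coe_ne_bot) hv
    rw [degree_add_eq_right hdeg,
      show v 1 * (-T 1) = -(v 1 * T 1) by ring, degree_neg, degree_mul_T, hn]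
    calc (v 0).degree < (n : WithBot ℤ) := hn ▸ hv
      _ ≤ ((n + 1 : ℤ) : WithBot ℤ) := by exact_mod_cast (lt_add_one n).le
      _ = (n : WithBot ℤ) + ((1 : ℤ) : WithBot ℤ) := by rw [← WithBot.coe_add]

lemma goodVec_word (p : ℕ) (Q : List Bool) (v : Fin 2 → LaurentPolynomial (ZMod p))
    (hv : GoodVec p v) : GoodVec p (v ᵥ* (Q.map (letterMat p)).prod) := by
  induction Q generalizing v with
  | nil => simpa using hv
  | cons b l ih =>
    have : v ᵥ* (List.map (letterMat p) (b :: l)).prod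
        = (v ᵥ* letterMat p b) ᵥ* (List.map (letterMat p) l).prod := by
      rw [List.map_cons, List.prod_cons, Matrix.vecMul_vecMul]
    rw [this]
    exact ih _ (goodVec_step p v hv b)

/-- For `α = σ₂ · Q · Δ₃^{2k}` with `Q` a word in `σ₁⁻¹, σ₂` and `k ∈ ℤ`, the
row vector `(1,0)` is not fixed by the reduced Burau action of `α`; in
particular `ρ(α)` is not the identity matrix.  Here `ρ(Δ₃^{2k}) = t^{3k}·Id`. -/
theorem burau3_pA_nontrivial (p : ℕ) (hp : 2 ≤ p) (Q : List Bool) (k : ℤ) :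
    Matrix.vecMul ![1, 0]
        (M2 p * (Q.map (letterMat p)).prod * ((T (3 * k) : LaurentPolynomial (ZMod p)) • 1))
      ≠ ![1, 0] ∧
    M2 p * (Q.map (letterMat p)).prod * ((T (3 * k) : LaurentPolynomial (ZMod p)) • 1) ≠ 1 := by
  haveI : Fact (1 < p) := ⟨hp⟩
  have hbase : GoodVec p (![1, 0] ᵥ* M2 p) := by
    have h : (![1, 0] ᵥ* M2 p) = ![1, T 1] := by
      funext j
      fin_cases j <;> simp [M2, vecMul, dotProduct, Fin.sum_univ_two]
    rw [GoodVec, h]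
    show (1 : LaurentPolynomial (ZMod p)).degree < (T 1 : LaurentPolynomial (ZMod p)).degree
    have hone : (1 : LaurentPolynomial (ZMod p)).degree = 0 := by
      simpa using LaurentPolynomial.degree_C (R := ZMod p) (one_ne_zero)
    rw [hone, LaurentPolynomial.degree_T]
    exact_mod_cast zero_lt_one
  have hword : GoodVec p ((![1, 0] ᵥ* M2 p) ᵥ* (Q.map (letterMat p)).prod) :=
    goodVec_word p Q _ hbase
  set w := (![1, 0] ᵥ* M2 p) ᵥ* (Q.map (letterMat p)).prod with hw
  have hfull : Matrix.vecMul ![1, 0]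
      (M2 p * (Q.map (letterMat p)).prod * ((T (3 * k) : LaurentPolynomial (ZMod p)) • 1))
      = fun j => w j * T (3 * k) := by
    rw [← Matrix.vecMul_vecMul, ← Matrix.vecMul_vecMul, ← hw, vecMul_smul_one]
  have hgood : GoodVec p (fun j => w j * T (3 * k)) := by
    rw [GoodVec]
    show (w 0 * T (3 * k)).degree < (w 1 * T (3 * k)).degree
    rw [degree_mul_T, degree_mul_T]
    exact WithBot.add_lt_add_right (by exact_mod_cast WithBot.coe_ne_bot) hword
  have key : (fun j => w j * T (3 * k)) ≠ (![1, 0] : Fin 2 → LaurentPolynomial (ZMod p)) := by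
    intro heq
    have h1 : w 1 * T (3 * k) = 0 := by simpa using congrFun heq 1
    rw [GoodVec] at hgood
    rw [h1] at hgood
    simp only [degree_zero] at hgood
    exact absurd hgood not_lt_bot
  constructor
  · intro heq
    exact key (hfull ▸ heq)
  · intro heq
    apply key
    rw [← hfull, heq, Matrix.vecMul_one]
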